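/- For the λI-calculus Church booleans T_I := λx y. y I I x and F_I := λx. x I I I (where I := λx. x), the following hold: (i) for all λ-terms M, N: T_I M N ↠β N I I M and F_I M N ↠β M I I I N; (ii) for all M, N ∈ {T_I, F_I}: N I I M ↠β M and M I I I N ↠β N; hence (iii) for all M, N ∈ {T_I, F_I}: T_I M N ↠β M and F_I M N ↠β N. -/
import Mathlib


/-- Untyped λ-terms in de Bruijn representation. -/
inductive Lam : Type
  | var : ℕ → Lam
  | app : Lam → Lam → Lam
  | lam : Lam → Lam
  deriving DecidableEq

/-- Lift (shift) the free variables `≥ d` of a term by one. -/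
def Lam.lift (d : ℕ) : Lam → Lam
  | .var n => if n < d then .var n else .var (n + 1)
  | .app a b => .app (a.lift d) (b.lift d)
  | .lam a => .lam (a.lift (d + 1))

/-- Capture-avoiding substitution of `s` for the variable `k`. -/
def Lam.subst : Lam → ℕ → Lam → Lam
  | .var n, k, s => if n = k then s else if k < n then .var (n - 1) else .var n
  | .app a b, k, s => .app (a.subst k s) (b.subst k s)
  | .lam a, k, s => .lam (a.subst (k + 1) (s.lift 0))

/-- One-step β-reduction. -/
inductive Lam.Step : Lam → Lam → Prop
  | beta (a b : Lam) : Lam.Step (.app (.lam a) b) (a.subst 0 b)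
  | appL {a a' : Lam} (b : Lam) : Lam.Step a a' → Lam.Step (.app a b) (.app a' b)
  | appR (a : Lam) {b b' : Lam} : Lam.Step b b' → Lam.Step (.app a b) (.app a b')
  | lam {a a' : Lam} : Lam.Step a a' → Lam.Step (.lam a) (.lam a')

/-- β-reduction: reflexive–transitive closure of one-step β-reduction. -/
def Lam.Red : Lam → Lam → Prop := Relation.ReflTransGen Lam.Step

/-- β-convertibility: the equivalence closure of one-step β-reduction. -/
def Lam.BetaEq : Lam → Lam → Prop := Relation.EqvGen Lam.Step

/-- The variable `k` occurs free in the term. -/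
def Lam.HasVar : Lam → ℕ → Prop
  | .var n, k => n = k
  | .app a b, k => a.HasVar k ∨ b.HasVar k
  | .lam a, k => a.HasVar (k + 1)

/-- A term is closed when it has no free variables. -/
def Lam.Closed (M : Lam) : Prop := ∀ k, ¬ M.HasVar k

/-- The identity combinator `I := λx. x`. -/
def Iterm : Lam := .lam (.var 0)

/-- A closed term `M` is solvable if `M N₁ ⋯ Nₖ =β I` for some terms `N₁, …, Nₖ`. -/
def Lam.Solvable (M : Lam) : Prop :=
  ∃ l : List Lam, Lam.BetaEq (l.foldl Lam.app M) Iterm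

/-- The Church boolean true, `T := λx y. x`. -/
def Tb : Lam := .lam (.lam (.var 1))

/-- The Church boolean false, `F := λx y. y`. -/
def Fb : Lam := .lam (.lam (.var 0))

/-- Negation: `¬M := M F T`. -/
def negL (M : Lam) : Lam := .app (.app M Fb) Tb

/-- Left-sequential conjunction: `M ⋀ N := M N M`. -/
def andL (M N : Lam) : Lam := .app (.app M N) M

/-- Left-sequential disjunction: `M ⋁ N := M M N`. -/
def orL (M N : Lam) : Lam := .app (.app M M) N

/-- Implication: `M ⇒ N := M N T`. -/
def impL (M N : Lam) : Lam := .app (.app M N) Tb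

/-- The λI Church boolean true, `T_I := λx y. y I I x`. -/
def TI : Lam := .lam (.lam (.app (.app (.app (.var 0) Iterm) Iterm) (.var 1)))

/-- The λI Church boolean false, `F_I := λx. x I I I`. -/
def FI : Lam := .lam (.app (.app (.app (.var 0) Iterm) Iterm) Iterm)


namespace Lam

theorem subst_lift (M : Lam) (d : ℕ) (s : Lam) : (M.lift d).subst d s = M := by
  induction M generalizing d s with
  | var n =>
      simp only [Lam.lift]
      split
      · next h => simp only [Lam.subst]; rw [if_neg (by omega), if_neg (by omega)]
      · next h => simp only [Lam.subst]; rw [if_neg (by omega), if_pos (by omega)]; simp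
  | app a b iha ihb => simp [Lam.lift, Lam.subst, iha, ihb]
  | lam a iha => simp [Lam.lift, Lam.subst, iha]

theorem Red.single {a b : Lam} (h : Lam.Step a b) : Lam.Red a b :=
  Relation.ReflTransGen.single h

theorem Red.rfl {a : Lam} : Lam.Red a a := Relation.ReflTransGen.refl

theorem Red.trans {a b c : Lam} (h1 : Lam.Red a b) (h2 : Lam.Red b c) : Lam.Red a c :=
  Relation.ReflTransGen.trans h1 h2

theorem Red.appL {a a' : Lam} (b : Lam) (h : Lam.Red a a') :
    Lam.Red (.app a b) (.app a' b) := by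
  induction h with
  | refl => exact Red.rfl
  | tail _ s ih => exact ih.trans (Red.single (Lam.Step.appL b s))

theorem Red.appR (a : Lam) {b b' : Lam} (h : Lam.Red b b') :
    Lam.Red (.app a b) (.app a b') := by
  induction h with
  | refl => exact Red.rfl
  | tail _ s ih => exact ih.trans (Red.single (Lam.Step.appR a s))

theorem I_red (M : Lam) : Lam.Red (.app Iterm M) M := by
  have h := Lam.Step.beta (.var 0) M
  simpa [Lam.subst, Iterm] using Red.single h

theorem TI_red (M N : Lam) :
    Lam.Red (.app (.app TI M) N) (.app (.app (.app N Iterm) Iterm) M) := by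
  have h1 : Lam.Step (.app TI M)
      (.lam (.app (.app (.app (.var 0) Iterm) Iterm) (M.lift 0))) := by
    have h := Lam.Step.beta (.lam (.app (.app (.app (.var 0) Iterm) Iterm) (.var 1))) M
    simpa [Lam.subst, Lam.lift, Iterm, TI] using h
  have h2 : Lam.Step
      (Lam.app (.lam (.app (.app (.app (.var 0) Iterm) Iterm) (M.lift 0))) N)
      (.app (.app (.app N Iterm) Iterm) M) := by
    have h := Lam.Step.beta (.app (.app (.app (.var 0) Iterm) Iterm) (M.lift 0)) N
    simpa [Lam.subst, Lam.lift, Iterm, subst_lift] using h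
  exact (Red.single (Lam.Step.appL N h1)).trans (Red.single h2)

theorem FI_red (M N : Lam) :
    Lam.Red (.app (.app FI M) N)
      (.app (.app (.app (.app M Iterm) Iterm) Iterm) N) := by
  have h1 : Lam.Step (.app FI M) (.app (.app (.app M Iterm) Iterm) Iterm) := by
    have h := Lam.Step.beta (.app (.app (.app (.var 0) Iterm) Iterm) Iterm) M
    simpa [Lam.subst, Lam.lift, Iterm, FI] using h
  exact Red.single (Lam.Step.appL N h1)

theorem bool_II {M : Lam} (hM : M = TI ∨ M = FI) :
    Lam.Red (.app (.app M Iterm) Iterm) Iterm := by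
  rcases hM with h | h <;> subst h
  · refine (TI_red Iterm Iterm).trans ?_
    refine (Red.appL _ (Red.appL _ (I_red Iterm))).trans ?_
    exact (Red.appL _ (I_red Iterm)).trans (I_red Iterm)
  · have h1 : Lam.Step (.app FI Iterm)
        (.app (.app (.app Iterm Iterm) Iterm) Iterm) := by
      have h := Lam.Step.beta (.app (.app (.app (.var 0) Iterm) Iterm) Iterm) Iterm
      simpa [Lam.subst, Lam.lift, Iterm, FI] using h
    refine ((Red.appL Iterm (Red.single h1)).trans ?_)
    refine (Red.appL _ (Red.appL _ (Red.appL _ (I_red Iterm)))).trans ?_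
    refine (Red.appL _ (Red.appL _ (I_red Iterm))).trans ?_
    exact (Red.appL _ (I_red Iterm)).trans (I_red Iterm)

end Lam

/-- Behaviour of the λI Church booleans: (i) the general reduction shapes,
(ii) their behaviour on booleans, and hence (iii) the if-then-else rules
on booleans. -/
theorem lamI_boolean_ite :
    (∀ M N : Lam,
      Lam.Red (.app (.app TI M) N) (.app (.app (.app N Iterm) Iterm) M) ∧
      Lam.Red (.app (.app FI M) N) (.app (.app (.app (.app M Iterm) Iterm) Iterm) N)) ∧
    (∀ M N : Lam, (M = TI ∨ M = FI) → (N = TI ∨ N = FI) →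
      Lam.Red (.app (.app (.app N Iterm) Iterm) M) M ∧
      Lam.Red (.app (.app (.app (.app M Iterm) Iterm) Iterm) N) N) ∧
    (∀ M N : Lam, (M = TI ∨ M = FI) → (N = TI ∨ N = FI) →
      Lam.Red (.app (.app TI M) N) M ∧ Lam.Red (.app (.app FI M) N) N) := by
  have part1 : ∀ M N : Lam,
      Lam.Red (.app (.app TI M) N) (.app (.app (.app N Iterm) Iterm) M) ∧
      Lam.Red (.app (.app FI M) N) (.app (.app (.app (.app M Iterm) Iterm) Iterm) N) :=
    fun M N => ⟨Lam.TI_red M N, Lam.FI_red M N⟩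
  have part2 : ∀ M N : Lam, (M = TI ∨ M = FI) → (N = TI ∨ N = FI) →
      Lam.Red (.app (.app (.app N Iterm) Iterm) M) M ∧
      Lam.Red (.app (.app (.app (.app M Iterm) Iterm) Iterm) N) N := by
    intro M N hM hN
    constructor
    · exact (Lam.Red.appL M (Lam.bool_II hN)).trans (Lam.I_red M)
    · refine ((Lam.Red.appL _ (Lam.Red.appL Iterm (Lam.bool_II hM))).trans ?_)
      exact ((Lam.Red.appL N (Lam.I_red Iterm)).trans (Lam.I_red N))
  refine ⟨part1, part2, ?_⟩
  intro M N hM hN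
  exact ⟨(part1 M N).1.trans (part2 M N hM hN).1,
         (part1 M N).2.trans (part2 M N hM hN).2⟩
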